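/- Let F be an algebraically closed field, let f(x_1,…,x_n) be a multilinear polynomial over F that is non-central over M_2(F), and let P_m be the block-diagonal matrix defined below. Then there exist matrices T_1,…,T_n ∈ M_m(F) such that f(T_1,…,T_n) = P_m. -/
import Mathlib


/-- Evaluation of the multilinear polynomial
`f(x_1,…,x_n) = ∑_{σ ∈ S_n} c σ • x_{σ(1)} x_{σ(2)} ⋯ x_{σ(n)}`
(given by its coefficient family `c`) at the tuple `T` in an `F`-algebra `R`. -/
def mlEval {F : Type*} [CommSemiring F] {n : ℕ} (c : Equiv.Perm (Fin n) → F)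
    {R : Type*} [Ring R] [Algebra F R] (T : Fin n → R) : R :=
  ∑ σ : Equiv.Perm (Fin n), c σ • (List.ofFn fun i => T (σ i)).prod

/-- The block-diagonal matrix `P_m = diag(A_1,…,A_s)` (with an extra `1×1` zero block when
`m` is odd), where `s = ⌊m/2⌋` and `A_i = [[a_i, 1], [0, -a_i]]`. Rows `2k, 2k+1` carry the
block `A_{k+1}`. -/
def Pmat {F : Type*} [Field F] (m : ℕ) (a : Fin (m / 2) → F) :
    Matrix (Fin m) (Fin m) F :=
  Matrix.of fun i j =>
    if h : i.val / 2 < m / 2 then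
      if i = j then (if i.val % 2 = 0 then a ⟨i.val / 2, h⟩ else -a ⟨i.val / 2, h⟩)
      else if j.val = i.val + 1 ∧ i.val % 2 = 0 then 1 else 0
    else 0

section general
variable {F : Type*} [CommSemiring F] {n : ℕ} (c : Equiv.Perm (Fin n) → F)
variable {R : Type*} [Ring R] [Algebra F R]

lemma ofFn_update (T : Fin n → R) (σ : Equiv.Perm (Fin n)) (k : Fin n) (x : R) :
    (List.ofFn fun i => Function.update T k x (σ i)) =
      (List.ofFn fun i => T (σ i)).set (σ.symm k).val x := by
  apply List.ext_getElem
  · simp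
  · intro i h1 h2
    simp only [List.getElem_ofFn, List.getElem_set, Function.update_apply]
    have hlen : i < n := by simpa using h1
    by_cases hik : ((σ.symm k : Fin n) : ℕ) = i
    · have : σ ⟨i, hlen⟩ = k := by
        have : (⟨i, hlen⟩ : Fin n) = σ.symm k := by ext; exact hik.symm
        rw [this]; simp
      simp [hik, this]
    · have : σ ⟨i, hlen⟩ ≠ k := by
        intro h
        apply hik
        have h2 : (⟨i, hlen⟩ : Fin n) = σ.symm k := by rw [← h]; simp
        exact (congrArg Fin.val h2).symm
      simp [hik, this]

lemma mlEval_update_add (T : Fin n → R) (k : Fin n) (x y : R) :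
    mlEval c (Function.update T k (x + y)) =
      mlEval c (Function.update T k x) + mlEval c (Function.update T k y) := by
  unfold mlEval
  rw [← Finset.sum_add_distrib]
  refine Finset.sum_congr rfl fun σ _ => ?_
  rw [← smul_add]
  congr 1
  rw [ofFn_update, ofFn_update, ofFn_update, List.prod_set, List.prod_set, List.prod_set]
  simp only [List.length_ofFn]
  have : ((σ.symm k : Fin n) : ℕ) < n := (σ.symm k).isLt
  simp only [if_pos this]
  rw [mul_add, add_mul]

lemma mlEval_update_smul (T : Fin n → R) (k : Fin n) (r : F) (x : R) :
    mlEval c (Function.update T k (r • x)) = r • mlEval c (Function.update T k x) := by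
  unfold mlEval
  rw [Finset.smul_sum]
  refine Finset.sum_congr rfl fun σ _ => ?_
  rw [smul_comm]
  congr 1
  rw [ofFn_update, ofFn_update, List.prod_set, List.prod_set]
  simp only [List.length_ofFn]
  have : ((σ.symm k : Fin n) : ℕ) < n := (σ.symm k).isLt
  simp only [if_pos this]
  rw [mul_smul_comm, smul_mul_assoc]

lemma mlEval_algHom {R' : Type*} [Ring R'] [Algebra F R'] (φ : R →ₐ[F] R') (T : Fin n → R) :
    mlEval c (fun i => φ (T i)) = φ (mlEval c T) := by
  unfold mlEval
  rw [map_sum]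
  refine Finset.sum_congr rfl fun σ _ => ?_
  rw [map_smul]
  congr 1
  rw [map_list_prod, List.map_ofFn]
  rfl

lemma mlEval_conj (u v : R) (huv : u * v = 1) (hvu : v * u = 1) (T : Fin n → R) :
    mlEval c (fun i => u * T i * v) = u * mlEval c T * v := by
  have key : ∀ l : List R, (l.map fun x => u * x * v).prod = u * l.prod * v := by
    intro l
    induction l with
    | nil => simp [huv]
    | cons a l ih =>
      simp only [List.map_cons, List.prod_cons, ih]
      rw [mul_assoc (u*a) v, ← mul_assoc v (u*l.prod), ← mul_assoc v u, hvu, one_mul,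
        ← mul_assoc, ← mul_assoc, mul_assoc u a]
  unfold mlEval
  rw [Finset.mul_sum, Finset.sum_mul]
  refine Finset.sum_congr rfl fun σ _ => ?_
  rw [mul_smul_comm, smul_mul_assoc]
  congr 1
  rw [← key, List.map_ofFn]
  rfl

end general

section expand
variable {F : Type*} [CommSemiring F] {n : ℕ} (c : Equiv.Perm (Fin n) → F)
variable {R : Type*} [Ring R] [Algebra F R]

lemma mlEval_expand_aux (D N : Fin n → R) (K : Finset (Fin n)) :
    ∀ T : Fin n → R,
      mlEval c (fun i => if i ∈ K then D i + N i else T i) =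
        ∑ S ∈ K.powerset,
          mlEval c (fun i => if i ∈ S then N i else if i ∈ K then D i else T i) := by
  classical
  induction K using Finset.induction_on with
  | empty => intro T; simp
  | @insert a K ha ih =>
    intro T
    have hL : (fun i => if i ∈ insert a K then D i + N i else T i) =
        Function.update (fun i => if i ∈ K then D i + N i else T i) a (D a + N a) := by
      funext i
      rcases eq_or_ne i a with rfl | hia
      · simp [ha]
      · simp [Function.update_apply, hia, Finset.mem_insert, hia]
    rw [hL, mlEval_update_add]
    have hD : Function.update (fun i => if i ∈ K then D i + N i else T i) a (D a) =
        fun i => if i ∈ K then D i + N i else (Function.update T a (D a)) i := by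
      funext i
      rcases eq_or_ne i a with rfl | hia
      · simp [ha]
      · simp [Function.update_apply, hia]
    have hN : Function.update (fun i => if i ∈ K then D i + N i else T i) a (N a) =
        fun i => if i ∈ K then D i + N i else (Function.update T a (N a)) i := by
      funext i
      rcases eq_or_ne i a with rfl | hia
      · simp [ha]
      · simp [Function.update_apply, hia]
    rw [hD, hN, ih, ih, Finset.sum_powerset_insert ha]
    congr 1
    · refine Finset.sum_congr rfl fun S hS => ?_
      rw [Finset.mem_powerset] at hS
      congr 1
      funext i
      rcases eq_or_ne i a with h | hia
      · have haS : a ∉ S := fun hh => ha (hS hh)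
        simp [h, haS, ha, Function.update_apply]
      · simp [Function.update_apply, hia, Finset.mem_insert, hia]
    · refine Finset.sum_congr rfl fun S hS => ?_
      rw [Finset.mem_powerset] at hS
      congr 1
      funext i
      rcases eq_or_ne i a with h | hia
      · simp [h, ha, Function.update_apply]
      · have : i ∈ insert a S ↔ i ∈ S := by simp [Finset.mem_insert, hia]
        by_cases hiS : i ∈ S
        · simp [hiS, this.mpr hiS]
        · have : i ∉ insert a S := by simp [Finset.mem_insert, hia, hiS]
          simp [hiS, this, Function.update_apply, hia, Finset.mem_insert]

lemma mlEval_expand (D N : Fin n → R) :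
    mlEval c (fun i => D i + N i) =
      ∑ S ∈ (Finset.univ : Finset (Fin n)).powerset,
        mlEval c (fun i => if i ∈ S then N i else D i) := by
  classical
  have := mlEval_expand_aux c D N Finset.univ D
  simpa using this

end expand

section grading
variable {R : Type*} [CommRing R]

/-- grading predicate: `false` = diagonal, `true` = off-diagonal -/
def Gr (b : Bool) (M : Matrix (Fin 2) (Fin 2) R) : Prop :=
  if b then (M 0 0 = 0 ∧ M 1 1 = 0) else (M 0 1 = 0 ∧ M 1 0 = 0)

lemma Gr_one : Gr false (1 : Matrix (Fin 2) (Fin 2) R) := by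
  constructor <;> simp [Matrix.one_apply]

lemma Gr_mul {b1 b2 : Bool} {M N : Matrix (Fin 2) (Fin 2) R}
    (h1 : Gr b1 M) (h2 : Gr b2 N) : Gr (xor b1 b2) (M * N) := by
  cases b1 <;> cases b2 <;>
    · obtain ⟨p1, q1⟩ := h1
      obtain ⟨p2, q2⟩ := h2
      constructor <;> simp [Matrix.mul_apply, Fin.sum_univ_two, p1, q1, p2, q2]

lemma Gr_list_prod : ∀ (l : List (Matrix (Fin 2) (Fin 2) R × Bool)),
    (∀ p ∈ l, Gr p.2 p.1) →
    Gr ((l.map Prod.snd).foldr xor false) (l.map Prod.fst).prod := by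
  intro l
  induction l with
  | nil => intro _; simpa using Gr_one
  | cons p l ih =>
    intro h
    simp only [List.map_cons, List.prod_cons, List.foldr_cons]
    exact Gr_mul (h p (by simp)) (ih fun q hq => h q (by simp [hq]))

end grading

section gradedEval
variable {F : Type*} [CommSemiring F] {n : ℕ} (c : Equiv.Perm (Fin n) → F)
variable {R : Type*} [CommRing R] [Algebra F R]

lemma foldr_xor_iff (l : List Bool) :
    (l.foldr xor false = true) ↔ ((l.map fun b => cond b (1 : ZMod 2) 0).sum = 1) := by
  induction l with
  | nil => simp
  | cons b l ih =>
    simp only [List.foldr_cons, List.map_cons, List.sum_cons]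
    cases b
    · simpa using ih
    · simp only [Bool.true_xor, Bool.not_eq_true', cond_true]
      rw [show (List.foldr xor false l = false) ↔ ¬ (List.foldr xor false l = true) by simp, ih]
      generalize (l.map fun b => cond b (1 : ZMod 2) 0).sum = z
      revert z; decide

/-- value of a graded odd tuple is off-diagonal -/
lemma mlEval_graded_off (ty : Fin n → Bool) (T : Fin n → Matrix (Fin 2) (Fin 2) R)
    (hty : ∀ i, Gr (ty i) (T i))
    (hpar : (∑ i, cond (ty i) (1 : ZMod 2) 0) = 1) :
    mlEval c T 0 0 = 0 ∧ mlEval c T 1 1 = 0 := by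
  have key : ∀ σ : Equiv.Perm (Fin n),
      Gr true ((List.ofFn fun i => T (σ i)).prod) := by
    intro σ
    have this1 := Gr_list_prod (List.ofFn fun i => (T (σ i), ty (σ i)))
      (by
        intro p hp
        rw [List.mem_ofFn] at hp
        obtain ⟨i, rfl⟩ := hp
        exact hty (σ i))
    rw [List.map_ofFn, List.map_ofFn,
      show (Prod.fst ∘ fun i => (T (σ i), ty (σ i))) = fun i => T (σ i) from rfl,
      show (Prod.snd ∘ fun i => (T (σ i), ty (σ i))) = fun i => ty (σ i) from rfl] at this1
    have hfold : (List.ofFn fun i => ty (σ i)).foldr xor false = true := by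
      rw [foldr_xor_iff, List.map_ofFn,
        show ((fun b => cond b (1 : ZMod 2) 0) ∘ fun i => ty (σ i)) =
          fun i => cond (ty (σ i)) (1 : ZMod 2) 0 from rfl,
        List.sum_ofFn, Equiv.sum_comp σ (fun i => cond (ty i) (1 : ZMod 2) 0)]
      exact hpar
    rwa [hfold] at this1
  constructor <;>
  · unfold mlEval
    rw [Matrix.sum_apply]
    refine Finset.sum_eq_zero fun σ _ => ?_
    have hG := key σ
    unfold Gr at hG
    simp only [if_pos] at hG
    rw [Matrix.smul_apply]
    first
      | rw [hG.1, smul_zero]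
      | rw [hG.2, smul_zero]

end gradedEval

section gradedEval2
variable {F : Type*} [CommSemiring F] {n : ℕ} (c : Equiv.Perm (Fin n) → F)
variable {R : Type*} [CommRing R] [Algebra F R]

lemma foldr_xor_false_iff (l : List Bool) :
    (l.foldr xor false = false) ↔ ((l.map fun b => cond b (1 : ZMod 2) 0).sum = 0) := by
  rw [show (l.foldr xor false = false) ↔ ¬(l.foldr xor false = true) by simp, foldr_xor_iff]
  generalize (l.map fun b => cond b (1 : ZMod 2) 0).sum = z
  revert z; decide

/-- value of a graded even tuple is diagonal -/
lemma mlEval_graded_diag (ty : Fin n → Bool) (T : Fin n → Matrix (Fin 2) (Fin 2) R)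
    (hty : ∀ i, Gr (ty i) (T i))
    (hpar : (∑ i, cond (ty i) (1 : ZMod 2) 0) = 0) :
    mlEval c T 0 1 = 0 ∧ mlEval c T 1 0 = 0 := by
  have key : ∀ σ : Equiv.Perm (Fin n),
      Gr false ((List.ofFn fun i => T (σ i)).prod) := by
    intro σ
    have this1 := Gr_list_prod (List.ofFn fun i => (T (σ i), ty (σ i)))
      (by
        intro p hp
        rw [List.mem_ofFn] at hp
        obtain ⟨i, rfl⟩ := hp
        exact hty (σ i))
    rw [List.map_ofFn, List.map_ofFn,
      show (Prod.fst ∘ fun i => (T (σ i), ty (σ i))) = fun i => T (σ i) from rfl,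
      show (Prod.snd ∘ fun i => (T (σ i), ty (σ i))) = fun i => ty (σ i) from rfl] at this1
    have hfold : (List.ofFn fun i => ty (σ i)).foldr xor false = false := by
      rw [foldr_xor_false_iff, List.map_ofFn,
        show ((fun b => cond b (1 : ZMod 2) 0) ∘ fun i => ty (σ i)) =
          fun i => cond (ty (σ i)) (1 : ZMod 2) 0 from rfl,
        List.sum_ofFn, Equiv.sum_comp σ (fun i => cond (ty i) (1 : ZMod 2) 0)]
      exact hpar
    rwa [hfold] at this1
  constructor <;>
  · unfold mlEval
    rw [Matrix.sum_apply]
    refine Finset.sum_eq_zero fun σ _ => ?_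
    have hG := key σ
    unfold Gr at hG
    rw [if_neg (by simp : ¬ ((false : Bool) = true))] at hG
    rw [Matrix.smul_apply]
    first
      | rw [hG.1, smul_zero]
      | rw [hG.2, smul_zero]

end gradedEval2

section extraction
variable {F : Type*} [Field F] {n : ℕ} (c : Equiv.Perm (Fin n) → F)

/-- from noncentrality: there is a graded odd tuple with nonzero value -/
lemma exists_off_value
    (hf : ¬ ∀ T : Fin n → Matrix (Fin 2) (Fin 2) F, ∃ b : F,
      mlEval c T = b • (1 : Matrix (Fin 2) (Fin 2) F)) :
    ∃ (ty : Fin n → Bool) (P : Fin n → Matrix (Fin 2) (Fin 2) F),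
      (∀ i, Gr (ty i) (P i)) ∧ (∑ i, cond (ty i) (1 : ZMod 2) 0) = 1 ∧
        mlEval c P ≠ 0 := by
  classical
  push_neg at hf
  obtain ⟨T, hT⟩ := hf
  by_contra hcon
  push_neg at hcon
  -- all values are diagonal
  have alldiag : ∀ S : Fin n → Matrix (Fin 2) (Fin 2) F,
      mlEval c S 0 1 = 0 ∧ mlEval c S 1 0 = 0 := by
    intro S
    set D : Fin n → Matrix (Fin 2) (Fin 2) F :=
      fun i => Matrix.of fun j k => if j = k then S i j k else 0 with hD
    set N : Fin n → Matrix (Fin 2) (Fin 2) F :=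
      fun i => Matrix.of fun j k => if j = k then 0 else S i j k with hN
    have hS : S = fun i => D i + N i := by
      funext i
      ext j k
      by_cases h : j = k <;> simp [D, N, h]
    rw [hS, mlEval_expand]
    constructor <;>
    · rw [Matrix.sum_apply]
      refine Finset.sum_eq_zero fun Sset _ => ?_
      set ty : Fin n → Bool := fun i => decide (i ∈ Sset) with hty
      set Q : Fin n → Matrix (Fin 2) (Fin 2) F :=
        fun i => if i ∈ Sset then N i else D i with hQ
      have hgr : ∀ i, Gr (ty i) (Q i) := by
        intro i
        by_cases h : i ∈ Sset
        · rw [show ty i = true by simp [ty, h], show Q i = N i by simp [Q, h]]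
          unfold Gr
          rw [if_pos rfl]
          constructor <;> simp [N]
        · rw [show ty i = false by simp [ty, h], show Q i = D i by simp [Q, h]]
          unfold Gr
          rw [if_neg (by simp : ¬ ((false : Bool) = true))]
          constructor <;> simp [D]
      rcases (by generalize (∑ i, cond (ty i) (1 : ZMod 2) 0) = z; revert z; decide :
          (∑ i, cond (ty i) (1 : ZMod 2) 0) = 0 ∨ (∑ i, cond (ty i) (1 : ZMod 2) 0) = 1)
        with hp | hp
      · have := mlEval_graded_diag c ty Q hgr hp
        first
          | exact this.1
          | exact this.2
      · have := hcon ty Q hgr hp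
        rw [this]
        simp
  have hX := alldiag T
  set X := mlEval c T with hXdef
  -- conjugate by the unipotent matrix
  have hcj := mlEval_conj c (!![1, 1; 0, 1] : Matrix (Fin 2) (Fin 2) F) !![1, -1; 0, 1]
    (by ext j k; fin_cases j <;> fin_cases k <;>
      simp [Matrix.mul_apply, Fin.sum_univ_two, Matrix.one_apply])
    (by ext j k; fin_cases j <;> fin_cases k <;>
      simp [Matrix.mul_apply, Fin.sum_univ_two, Matrix.one_apply])
    T
  have hY := (alldiag fun i => !![1, 1; 0, 1] * T i * !![1, -1; 0, 1]).1
  rw [hcj] at hY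
  have hentry : (((!![1, 1; 0, 1] : Matrix (Fin 2) (Fin 2) F) * X * !![1, -1; 0, 1] : Matrix (Fin 2) (Fin 2) F)) 0 1 = X 1 1 - X 0 0 := by
    simp [Matrix.mul_apply, Fin.sum_univ_two, Matrix.vecMul, Matrix.vecHead, Matrix.vecTail,
      dotProduct, hX.1, hX.2]
    ring
  rw [hentry] at hY
  have heq : X 1 1 = X 0 0 := by linear_combination hY
  apply hT (X 0 0)
  ext j k
  fin_cases j <;> fin_cases k <;>
    simp [Matrix.smul_apply, Matrix.one_apply, hX.1, hX.2, heq]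

end extraction

section hard
variable {F : Type*} [Field F] [IsAlgClosed F] {n : ℕ} (c : Equiv.Perm (Fin n) → F)

lemma swap_conj_apply {R : Type*} [CommRing R] (M : Matrix (Fin 2) (Fin 2) R) (j k : Fin 2) :
    ((!![0, 1; 1, 0] : Matrix (Fin 2) (Fin 2) R) * M * !![0, 1; 1, 0]
      : Matrix (Fin 2) (Fin 2) R) j k = M (j + 1) (k + 1) := by
  fin_cases j <;> fin_cases k <;>
    simp [Matrix.mul_apply, Fin.sum_univ_two, Matrix.vecMul, Matrix.vecHead, Matrix.vecTail,
      dotProduct]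

lemma Gr_swap_conj {R : Type*} [CommRing R] {b : Bool} {M : Matrix (Fin 2) (Fin 2) R}
    (h : Gr b M) :
    Gr b ((!![0, 1; 1, 0] : Matrix (Fin 2) (Fin 2) R) * M * !![0, 1; 1, 0]) := by
  unfold Gr at h ⊢
  cases b
  · rw [if_neg (by simp : ¬ ((false : Bool) = true))] at h ⊢
    rw [swap_conj_apply, swap_conj_apply]
    exact ⟨by rw [show (0 : Fin 2) + 1 = 1 by rfl, show (1 : Fin 2) + 1 = 0 by rfl, h.2],
      by rw [show (0 : Fin 2) + 1 = 1 by rfl, show (1 : Fin 2) + 1 = 0 by rfl, h.1]⟩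
  · rw [if_pos rfl] at h ⊢
    rw [swap_conj_apply, swap_conj_apply]
    exact ⟨by rw [show (0 : Fin 2) + 1 = 1 by rfl, h.2],
      by rw [show (1 : Fin 2) + 1 = 0 by rfl, h.1]⟩

lemma swap_mul_swap {R : Type*} [CommRing R] :
    (!![0, 1; 1, 0] : Matrix (Fin 2) (Fin 2) R) * !![0, 1; 1, 0] = 1 := by
  ext j k
  fin_cases j <;> fin_cases k <;>
    simp [Matrix.mul_apply, Fin.sum_univ_two, Matrix.one_apply]

/-- the hard step: some value is off-diagonal with both off-diagonal entries nonzero -/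
lemma exists_good_off_value
    (hf : ¬ ∀ T : Fin n → Matrix (Fin 2) (Fin 2) F, ∃ b : F,
      mlEval c T = b • (1 : Matrix (Fin 2) (Fin 2) F)) :
    ∃ T : Fin n → Matrix (Fin 2) (Fin 2) F,
      mlEval c T 0 0 = 0 ∧ mlEval c T 1 1 = 0 ∧
        mlEval c T 0 1 ≠ 0 ∧ mlEval c T 1 0 ≠ 0 := by
  classical
  obtain ⟨ty, P, hgr, hpar, hne⟩ := exists_off_value c hf
  have hOffP := mlEval_graded_off c ty P hgr hpar
  -- get a graded tuple whose value has nonzero (0,1) entry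
  have step1 : ∃ P1 : Fin n → Matrix (Fin 2) (Fin 2) F,
      (∀ i, Gr (ty i) (P1 i)) ∧ mlEval c P1 0 1 ≠ 0 := by
    by_cases hu : mlEval c P 0 1 ≠ 0
    · exact ⟨P, hgr, hu⟩
    · push_neg at hu
      have hv : mlEval c P 1 0 ≠ 0 := by
        intro hv
        apply hne
        ext j k
        fin_cases j <;> fin_cases k <;>
          simp [hOffP.1, hOffP.2, hu, hv]
      refine ⟨fun i => !![0, 1; 1, 0] * P i * !![0, 1; 1, 0], fun i => Gr_swap_conj (hgr i), ?_⟩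
      rw [mlEval_conj c _ _ swap_mul_swap swap_mul_swap P, swap_conj_apply]
      rw [show (0 : Fin 2) + 1 = 1 by rfl, show (1 : Fin 2) + 1 = 0 by rfl]
      exact hv
  obtain ⟨P1, hgr1, hu1⟩ := step1
  have hOff1 := mlEval_graded_off c ty P1 hgr1 hpar
  by_cases hv1 : mlEval c P1 1 0 ≠ 0
  · exact ⟨P1, hOff1.1, hOff1.2, hu1, hv1⟩
  push_neg at hv1
  -- the swapped tuple
  set Q : Fin n → Matrix (Fin 2) (Fin 2) F :=
    fun i => !![0, 1; 1, 0] * P1 i * !![0, 1; 1, 0] with hQdef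
  have hgrQ : ∀ i, Gr (ty i) (Q i) := fun i => Gr_swap_conj (hgr1 i)
  have hvalQ : mlEval c Q = !![0, 1; 1, 0] * mlEval c P1 * !![0, 1; 1, 0] :=
    mlEval_conj c _ _ swap_mul_swap swap_mul_swap P1
  have hQ10 : mlEval c Q 1 0 = mlEval c P1 0 1 := by
    rw [hvalQ, swap_conj_apply]
    rw [show (1 : Fin 2) + 1 = 0 by rfl, show (0 : Fin 2) + 1 = 1 by rfl]
  -- two-parameter family over MvPolynomial
  set R := MvPolynomial (Fin 2) F with hRdef
  set 𝒯 : Fin n → Matrix (Fin 2) (Fin 2) R :=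
    fun i => Matrix.of fun j k =>
      MvPolynomial.X 0 * MvPolynomial.C (P1 i j k) +
        MvPolynomial.X 1 * MvPolynomial.C (Q i j k) with h𝒯
  have hgr𝒯 : ∀ i, Gr (ty i) (𝒯 i) := by
    intro i
    have h1 := hgr1 i
    have h2 := hgrQ i
    unfold Gr at h1 h2 ⊢
    cases hty : ty i <;> rw [hty] at h1 h2
    · rw [if_neg (by simp : ¬ ((false : Bool) = true))] at h1 h2 ⊢
      constructor <;> simp [𝒯, h1.1, h1.2, h2.1, h2.2]
    · rw [if_pos rfl] at h1 h2 ⊢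
      constructor <;> simp [𝒯, h1.1, h1.2, h2.1, h2.2]
  have hOffY := mlEval_graded_off c ty 𝒯 hgr𝒯 hpar
  set U := mlEval c 𝒯 0 1 with hU
  set V := mlEval c 𝒯 1 0 with hV
  -- specialization lemma
  have spec : ∀ x : Fin 2 → F,
      mlEval c (fun i => x 0 • P1 i + x 1 • Q i) =
        (mlEval c 𝒯).map (MvPolynomial.aeval x) := by
    intro x
    have key := mlEval_algHom c ((MvPolynomial.aeval x : R →ₐ[F] F).mapMatrix
      (m := Fin 2)) 𝒯
    rw [AlgHom.mapMatrix_apply] at key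
    have h2 : (fun i => x 0 • P1 i + x 1 • Q i) =
        fun i => ((MvPolynomial.aeval x : R →ₐ[F] F).mapMatrix (𝒯 i)) := by
      funext i
      ext j k
      simp [𝒯, AlgHom.mapMatrix_apply, Matrix.map_apply, Matrix.add_apply, Matrix.smul_apply]
    rw [h2, key]
  have hUne : U ≠ 0 := by
    intro h0
    have h1 := spec ![1, 0]
    have heval : (fun i => (![(1 : F), 0]) 0 • P1 i + (![(1 : F), 0]) 1 • Q i) = P1 := by
      funext i
      ext j k
      simp
    rw [heval] at h1
    apply hu1
    have h3 := congrFun (congrFun h1 0) 1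
    rw [h3, Matrix.map_apply, ← hU, h0]
    simp
  have hVne : V ≠ 0 := by
    intro h0
    have h1 := spec ![0, 1]
    have heval : (fun i => (![(0 : F), 1]) 0 • P1 i + (![(0 : F), 1]) 1 • Q i) = Q := by
      funext i
      ext j k
      simp
    rw [heval] at h1
    apply hu1
    rw [← hQ10]
    have h3 := congrFun (congrFun h1 1) 0
    rw [h3, Matrix.map_apply, ← hV, h0]
    simp
  -- find a good specialization point
  have hUV : U * V ≠ 0 := mul_ne_zero hUne hVne
  have hex : ∃ x : Fin 2 → F, MvPolynomial.eval x (U * V) ≠ 0 := by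
    by_contra hall
    push_neg at hall
    exact hUV (MvPolynomial.funext fun x => by rw [hall x, map_zero])
  obtain ⟨x, hx⟩ := hex
  have haeval : ∀ p : R, MvPolynomial.aeval x p = MvPolynomial.eval x p := fun p =>
    RingHom.congr_fun (MvPolynomial.coe_aeval_eq_eval x) p
  refine ⟨fun i => x 0 • P1 i + x 1 • Q i, ?_, ?_, ?_, ?_⟩ <;>
    rw [spec x, Matrix.map_apply]
  · rw [hOffY.1, map_zero]
  · rw [hOffY.2, map_zero]
  · intro h
    apply hx
    rw [map_mul, ← haeval U, ← hU] at *
    rw [h, zero_mul]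
  · intro h
    apply hx
    rw [map_mul, ← haeval V, ← hV] at *
    rw [h, mul_zero]

end hard

section perblock
variable {F : Type*} [Field F] [IsAlgClosed F] {n : ℕ} (c : Equiv.Perm (Fin n) → F)

lemma n_pos_of_noncentral
    (hf : ¬ ∀ T : Fin n → Matrix (Fin 2) (Fin 2) F, ∃ b : F,
      mlEval c T = b • (1 : Matrix (Fin 2) (Fin 2) F)) : 0 < n := by
  rcases Nat.eq_zero_or_pos n with h | h
  · exfalso
    subst h
    apply hf
    intro T
    refine ⟨c (Equiv.refl (Fin 0)), ?_⟩
    unfold mlEval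
    haveI : Subsingleton (Equiv.Perm (Fin 0)) :=
      ⟨fun a b => Equiv.ext fun x => x.elim0⟩
    rw [show (Finset.univ : Finset (Equiv.Perm (Fin 0))) = {Equiv.refl (Fin 0)} by
      apply Finset.eq_singleton_iff_unique_mem.mpr
      exact ⟨Finset.mem_univ _, fun y _ => Subsingleton.elim y _⟩]
    rw [Finset.sum_singleton, List.ofFn_zero, List.prod_nil]
  · exact h

/-- every matrix `!![t,1;0,-t]`, `t ≠ 0`, is a value -/
lemma exists_value_Amat
    (hf : ¬ ∀ T : Fin n → Matrix (Fin 2) (Fin 2) F, ∃ b : F,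
      mlEval c T = b • (1 : Matrix (Fin 2) (Fin 2) F))
    (t : F) (ht : t ≠ 0) :
    ∃ T : Fin n → Matrix (Fin 2) (Fin 2) F, mlEval c T = !![t, 1; 0, -t] := by
  classical
  have hn : 0 < n := n_pos_of_noncentral c hf
  obtain ⟨T, h00, h11, hp, hq⟩ := exists_good_off_value c hf
  set p := mlEval c T 0 1 with hpdef
  set q := mlEval c T 1 0 with hqdef
  obtain ⟨r, hr⟩ := IsAlgClosed.exists_pow_nat_eq (k := F) (t * t / (p * q)) (n := 2)
    (by norm_num)
  have hpq : p * q ≠ 0 := mul_ne_zero hp hq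
  rw [eq_div_iff hpq] at hr
  have hrne : r ≠ 0 := by
    intro h0
    rw [h0] at hr
    have hz : t * t = 0 := by linear_combination -hr
    exact ht (mul_self_eq_zero.mp hz)
  -- scale slot 0
  set k0 : Fin n := ⟨0, hn⟩ with hk0
  set T' : Fin n → Matrix (Fin 2) (Fin 2) F := Function.update T k0 (r • T k0) with hT'
  have hval' : mlEval c T' = r • mlEval c T := by
    rw [hT', mlEval_update_smul, Function.update_eq_self]
  set p' := r * p with hp'
  set q' := r * q with hq'
  have hp'q' : p' * q' = t * t := by
    rw [hp', hq']
    linear_combination hr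
  have hp'ne : p' ≠ 0 := mul_ne_zero hrne hp
  have hq'ne : q' ≠ 0 := mul_ne_zero hrne hq
  -- conjugate
  set g : Matrix (Fin 2) (Fin 2) F := !![-q' / t, 0; q', -t] with hg
  set gi : Matrix (Fin 2) (Fin 2) F := !![-t / q', 0; -1, -1 / t] with hgi
  have hggi : g * gi = 1 := by
    ext j k
    fin_cases j <;> fin_cases k <;>
      simp [hg, hgi, Matrix.mul_apply, Fin.sum_univ_two, Matrix.one_apply]
    all_goals field_simp
    all_goals ring1
  have higg : gi * g = 1 := by
    ext j k
    fin_cases j <;> fin_cases k <;>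
      simp [hg, hgi, Matrix.mul_apply, Fin.sum_univ_two, Matrix.one_apply]
    all_goals field_simp
    all_goals try ring
  refine ⟨fun i => g * T' i * gi, ?_⟩
  rw [mlEval_conj c g gi hggi higg T', hval']
  have hXmat : (r • mlEval c T) = !![0, p'; q', 0] := by
    ext j k
    fin_cases j <;> fin_cases k <;>
      simp [Matrix.smul_apply, h00, h11, hp', hq', ← hpdef, ← hqdef, mul_comm]
  rw [hXmat]
  clear_value p q k0 T' p' q' g gi
  ext j k
  fin_cases j <;> fin_cases k <;>
    simp [hg, hgi, Matrix.mul_apply, Fin.sum_univ_two, Matrix.vecMul, Matrix.vecHead,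
      Matrix.vecTail, dotProduct]
  all_goals try field_simp
  all_goals first
    | ring1
    | linear_combination hp'q'
    | linear_combination (-(1 : F)) * hp'q'
    | linear_combination t * hp'q'
    | linear_combination (-t) * hp'q'
    | linear_combination (t * t) * hp'q'
    | linear_combination q' * hp'q'
    | linear_combination (-q') * hp'q'
    | linear_combination hr
    | linear_combination (-(1 : F)) * hr
    | linear_combination t * hr
    | linear_combination (-t) * hr

end perblock

section blocks
variable {F : Type*} [Field F]

/-- embed a family of `2×2` blocks into an `m×m` matrix, block `k` occupying
rows/columns `2k, 2k+1`. -/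
def emb (m : ℕ) (V : Fin (m / 2) → Matrix (Fin 2) (Fin 2) F) :
    Matrix (Fin m) (Fin m) F :=
  Matrix.of fun i j =>
    if h : i.val / 2 < m / 2 ∧ i.val / 2 = j.val / 2 then
      V ⟨i.val / 2, h.1⟩ ⟨i.val % 2, Nat.mod_lt _ (by norm_num)⟩
        ⟨j.val % 2, Nat.mod_lt _ (by norm_num)⟩
    else 0

lemma emb_apply_pos (m : ℕ) (V : Fin (m / 2) → Matrix (Fin 2) (Fin 2) F)
    (i j : Fin m) (h1 : i.val / 2 < m / 2) (h2 : i.val / 2 = j.val / 2)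
    (r s : Fin 2) (hr : r.val = i.val % 2) (hs : s.val = j.val % 2) :
    emb m V i j = V ⟨i.val / 2, h1⟩ r s := by
  unfold emb
  rw [Matrix.of_apply, dif_pos ⟨h1, h2⟩]
  rw [show (⟨i.val % 2, Nat.mod_lt _ (by norm_num)⟩ : Fin 2) = r from Fin.ext hr.symm,
    show (⟨j.val % 2, Nat.mod_lt _ (by norm_num)⟩ : Fin 2) = s from Fin.ext hs.symm]

lemma emb_apply_neg (m : ℕ) (V : Fin (m / 2) → Matrix (Fin 2) (Fin 2) F)
    (i j : Fin m) (h : ¬ (i.val / 2 < m / 2 ∧ i.val / 2 = j.val / 2)) :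
    emb m V i j = 0 := by
  unfold emb
  rw [Matrix.of_apply, dif_neg h]

lemma emb_mul (m : ℕ) (V W : Fin (m / 2) → Matrix (Fin 2) (Fin 2) F) :
    emb m V * emb m W = emb m (fun k => V k * W k) := by
  ext i j
  rw [Matrix.mul_apply]
  by_cases hi : i.val / 2 < m / 2
  · have hk0m : 2 * (i.val / 2) < m := by omega
    have hk1m : 2 * (i.val / 2) + 1 < m := by omega
    set k0 : Fin m := ⟨2 * (i.val / 2), hk0m⟩ with hk0
    set k1 : Fin m := ⟨2 * (i.val / 2) + 1, hk1m⟩ with hk1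
    have hne : k0 ≠ k1 := by
      intro h
      rw [Fin.ext_iff] at h
      simp [hk0, hk1] at h
    have hsub : ∑ k : Fin m, emb m V i k * emb m W k j =
        ∑ k ∈ ({k0, k1} : Finset (Fin m)), emb m V i k * emb m W k j := by
      symm
      apply Finset.sum_subset (Finset.subset_univ _)
      intro k _ hk
      simp only [Finset.mem_insert, Finset.mem_singleton] at hk
      push_neg at hk
      have hkk : i.val / 2 ≠ k.val / 2 := by
        intro hkk
        rcases Nat.mod_two_eq_zero_or_one k.val with hm | hm
        · exact hk.1 (by symm; ext; simp [hk0]; try omega)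
        · exact hk.2 (by symm; ext; simp [hk1]; try omega)
      rw [emb_apply_neg m V i k (fun hc => hkk hc.2), zero_mul]
    rw [hsub, Finset.sum_pair hne]
    have hd0 : k0.val / 2 = i.val / 2 := by simp [hk0]; try omega
    have hd1 : k1.val / 2 = i.val / 2 := by simp [hk1]; try omega
    have hm0 : k0.val % 2 = 0 := by simp [hk0]; try omega
    have hm1 : k1.val % 2 = 1 := by simp [hk1]; try omega
    rw [emb_apply_pos m V i k0 hi (by omega) ⟨i.val % 2, Nat.mod_lt _ (by norm_num)⟩ 0
      rfl (by simp [hm0]),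
      emb_apply_pos m V i k1 hi (by omega) ⟨i.val % 2, Nat.mod_lt _ (by norm_num)⟩ 1
      rfl (by simp [hm1])]
    by_cases hj : i.val / 2 = j.val / 2
    · rw [emb_apply_pos m W k0 j (by omega) (by omega) 0
        ⟨j.val % 2, Nat.mod_lt _ (by norm_num)⟩ (by simp [hm0]) rfl,
        emb_apply_pos m W k1 j (by omega) (by omega) 1
        ⟨j.val % 2, Nat.mod_lt _ (by norm_num)⟩ (by simp [hm1]) rfl,
        emb_apply_pos m (fun k => V k * W k) i j hi hj
        ⟨i.val % 2, Nat.mod_lt _ (by norm_num)⟩ ⟨j.val % 2, Nat.mod_lt _ (by norm_num)⟩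
        rfl rfl]
      have hsame : (⟨k0.val / 2, by omega⟩ : Fin (m / 2)) = ⟨i.val / 2, hi⟩ := by
        ext
        simp [hd0]
      rw [show (⟨k0.val / 2, _⟩ : Fin (m / 2)) = ⟨i.val / 2, hi⟩ from by ext; simp [hd0],
        show (⟨k1.val / 2, _⟩ : Fin (m / 2)) = ⟨i.val / 2, hi⟩ from by ext; simp [hd1]]
      simp [Matrix.mul_apply, Fin.sum_univ_two]
    · rw [emb_apply_neg m W k0 j (fun hc => hj (by omega)),
        emb_apply_neg m W k1 j (fun hc => hj (by omega)),
        emb_apply_neg m (fun k => V k * W k) i j (fun hc => hj hc.2), mul_zero, mul_zero,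
        add_zero]
  · rw [Finset.sum_eq_zero fun k _ => by
      rw [emb_apply_neg m V i k (fun hc => hi hc.1), zero_mul]]
    rw [emb_apply_neg m (fun k => V k * W k) i j (fun hc => hi hc.1)]

lemma emb_smul (m : ℕ) {F' : Type*} [CommSemiring F'] [Algebra F' F]
    (r : F') (V : Fin (m / 2) → Matrix (Fin 2) (Fin 2) F) :
    emb m (fun k => r • V k) = r • emb m V := by
  ext i j
  by_cases h : i.val / 2 < m / 2 ∧ i.val / 2 = j.val / 2 <;>
    simp [emb, h]

lemma emb_sum (m : ℕ) {ι : Type*} (s : Finset ι)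
    (f : ι → Fin (m / 2) → Matrix (Fin 2) (Fin 2) F) :
    emb m (fun k => ∑ x ∈ s, f x k) = ∑ x ∈ s, emb m (f x) := by
  ext i j
  rw [Matrix.sum_apply]
  by_cases h : i.val / 2 < m / 2 ∧ i.val / 2 = j.val / 2
  · simp [emb, h, Matrix.sum_apply]
  · simp [emb, h]

lemma emb_prod_ofFn (m : ℕ) {N : ℕ} (hN : 0 < N)
    (g : Fin N → (Fin (m / 2) → Matrix (Fin 2) (Fin 2) F)) :
    (List.ofFn fun i => emb m (g i)).prod =
      emb m (fun k => (List.ofFn fun i => g i k).prod) := by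
  induction N with
  | zero => omega
  | succ N ih =>
    rcases Nat.eq_zero_or_pos N with hN0 | hN0
    · subst hN0
      simp only [List.ofFn_succ, List.ofFn_zero, List.prod_cons, List.prod_nil, mul_one]
    · rw [List.ofFn_succ, List.prod_cons, ih hN0 (fun i => g i.succ)]
      rw [emb_mul]
      have hfe : (fun k => g 0 k * (List.ofFn fun i => g i.succ k).prod) =
          fun k => (List.ofFn fun i => g i k).prod := by
        funext k
        rw [List.ofFn_succ, List.prod_cons]
      rw [hfe]

lemma mlEval_emb {n : ℕ} (hn : 0 < n) (c : Equiv.Perm (Fin n) → F) (m : ℕ)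
    (B : Fin (m / 2) → Fin n → Matrix (Fin 2) (Fin 2) F) :
    mlEval c (fun i => emb m (fun k => B k i)) =
      emb m (fun k => mlEval c (B k)) := by
  have step : ∀ σ : Equiv.Perm (Fin n),
      (c σ • (List.ofFn fun i => emb m (fun k => B k (σ i))).prod) =
        emb m (fun k => c σ • (List.ofFn fun i => B k (σ i)).prod) := by
    intro σ
    rw [emb_prod_ofFn m hn (fun i => fun k => B k (σ i)), ← emb_smul]
  unfold mlEval
  simp only []
  rw [Finset.sum_congr rfl (fun σ _ => step σ), ← emb_sum]

end blocks
section main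
variable {F : Type*} [Field F]

lemma emb_eq_Pmat (m : ℕ) (a : Fin (m / 2) → F) :
    emb m (fun k => !![a k, 1; 0, -(a k)]) = Pmat m a := by
  ext i j
  by_cases h : i.val / 2 < m / 2 ∧ i.val / 2 = j.val / 2
  · rw [emb_apply_pos m _ i j h.1 h.2 ⟨i.val % 2, Nat.mod_lt _ (by norm_num)⟩
      ⟨j.val % 2, Nat.mod_lt _ (by norm_num)⟩ rfl rfl]
    unfold Pmat
    simp only [Matrix.of_apply]
    rw [dif_pos h.1]
    rcases Nat.mod_two_eq_zero_or_one i.val with hi2 | hi2 <;>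
      rcases Nat.mod_two_eq_zero_or_one j.val with hj2 | hj2
    · -- i, j both even: i = j, diagonal entry `a`
      have hij : i = j := by apply Fin.ext; omega
      rw [if_pos hij, if_pos hi2,
        show (⟨i.val % 2, Nat.mod_lt _ (by norm_num)⟩ : Fin 2) = 0 from Fin.ext hi2,
        show (⟨j.val % 2, Nat.mod_lt _ (by norm_num)⟩ : Fin 2) = 0 from Fin.ext hj2]
      simp
    · -- i even, j odd: superdiagonal entry 1
      have hij : i ≠ j := by intro hij; rw [hij] at hi2; omega
      rw [if_neg hij, if_pos ⟨by omega, hi2⟩,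
        show (⟨i.val % 2, Nat.mod_lt _ (by norm_num)⟩ : Fin 2) = 0 from Fin.ext hi2,
        show (⟨j.val % 2, Nat.mod_lt _ (by norm_num)⟩ : Fin 2) = 1 from Fin.ext hj2]
      simp
    · -- i odd, j even: zero entry
      have hij : i ≠ j := by intro hij; rw [hij] at hi2; omega
      rw [if_neg hij, if_neg (by omega),
        show (⟨i.val % 2, Nat.mod_lt _ (by norm_num)⟩ : Fin 2) = 1 from Fin.ext hi2,
        show (⟨j.val % 2, Nat.mod_lt _ (by norm_num)⟩ : Fin 2) = 0 from Fin.ext hj2]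
      simp
    · -- i, j both odd: i = j, diagonal entry `-a`
      have hij : i = j := by apply Fin.ext; omega
      rw [if_pos hij, if_neg (by omega),
        show (⟨i.val % 2, Nat.mod_lt _ (by norm_num)⟩ : Fin 2) = 1 from Fin.ext hi2,
        show (⟨j.val % 2, Nat.mod_lt _ (by norm_num)⟩ : Fin 2) = 1 from Fin.ext hj2]
      simp
  · rw [emb_apply_neg m _ i j h]
    unfold Pmat
    simp only [Matrix.of_apply]
    split_ifs with h1 h2 h3
    all_goals try rfl
    all_goals first
      | exact absurd ⟨h1, by rw [h2]⟩ h
      | exact absurd ⟨h1, by omega⟩ h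

end main


/-- Let `F` be an algebraically closed field and `f(x_1,…,x_n)` a multilinear polynomial
over `F` that is non-central over `M_2(F)`. Then the matrix `P_m` is a value of `f`
on `M_m(F)`. -/
theorem Pmat_mem_image_of_noncentral_multilinear
    {F : Type*} [Field F] [IsAlgClosed F]
    {n : ℕ} (c : Equiv.Perm (Fin n) → F)
    (hf : ¬ ∀ T : Fin n → Matrix (Fin 2) (Fin 2) F, ∃ b : F,
      mlEval c T = b • (1 : Matrix (Fin 2) (Fin 2) F))
    (m : ℕ) (hm : 2 ≤ m) (a : Fin (m / 2) → F)
    (ha0 : ∀ i, a i ≠ 0)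
    (ha : ∀ i j, i ≠ j → a i ≠ a j ∧ a i ≠ -a j) :
    ∃ T : Fin n → Matrix (Fin m) (Fin m) F, mlEval c T = Pmat m a := by
  have hn : 0 < n := n_pos_of_noncentral c hf
  choose B hB using fun k : Fin (m / 2) => exists_value_Amat c hf (a k) (ha0 k)
  refine ⟨fun i => emb m (fun k => B k i), ?_⟩
  rw [mlEval_emb hn c m B]
  rw [show (fun k => mlEval c (B k)) = fun k : Fin (m / 2) => !![a k, 1; 0, -(a k)] from
    funext fun k => hB k]
  exact emb_eq_Pmat m a
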